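/- Fix positive reals γ_a, positive integers K, Q, R, N, J, T, J_mc with J = J_mc·T. The function f(μ₁, μ₂, μ_c) = (KJ/2)log₂(1+μ₁γ_a) + (QT/2)log₂(1+J_mc μ₂ γ_a) + (R/2)log₂(1+J μ_c γ_a) subject to K μ₁ + Q μ₂ + R μ_c = N and nonnegativity is maximized at μ_c = N/(KJ + QT + R), μ₁ = J·μ_c, μ₂ = T·μ_c, achieving ((KJ + QT + R)/2)·log₂(1 + N·J·γ_a/(KJ + QT + R)), and at the optimum μ₁/μ₂ = J_mc. -/

import Mathlib

/-!
Weight the three terms by the numbers of degrees of freedom `KJ`, `QT`, `R`. Thanks to the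
power constraint and `J = J_mc·T`, the weighted mean of the three arguments `1 + SNR` is always
`1 + NJγ/(KJ + QT + R)`, so concavity of `logb 2` (Jensen) bounds the sum rate by
`(KJ + QT + R)/2 · logb 2` of that mean. The proposed allocation makes the three SNRs equal,
so it attains the bound.
-/

open Real Finset Set

lemma Real.concaveOn_logb_Ioi {b : ℝ} (hb : 1 ≤ b) : ConcaveOn ℝ (Ioi 0) (logb b) := by
  have h : logb b = fun x ↦ (log b)⁻¹ • log x :=
    funext fun x ↦ by rw [smul_eq_mul, logb, inv_mul_eq_div]
  exact h ▸ strictConcaveOn_log_Ioi.concaveOn.smul (inv_nonneg.mpr (log_nonneg hb))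

lemma Real.sum_mul_logb_le_mul_logb_div {ι : Type*} {b : ℝ} (hb : 1 ≤ b) {s : Finset ι}
    {w x : ι → ℝ} (hw : ∀ i ∈ s, 0 ≤ w i) (hW : 0 < ∑ i ∈ s, w i) (hx : ∀ i ∈ s, 0 < x i) :
    ∑ i ∈ s, w i * logb b (x i) ≤
      (∑ i ∈ s, w i) * logb b ((∑ i ∈ s, w i * x i) / ∑ i ∈ s, w i) := by
  have h := (concaveOn_logb_Ioi hb).le_map_centerMass hw hW hx
  simp only [centerMass, Function.comp_apply, smul_eq_mul] at h
  rw [inv_mul_eq_div, inv_mul_eq_div, div_le_iff₀' hW] at h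
  exact h

lemma Real.mul_logb_add_mul_logb_add_mul_logb_le {b a₁ a₂ a₃ x₁ x₂ x₃ : ℝ} (hb : 1 ≤ b)
    (ha₁ : 0 ≤ a₁) (ha₂ : 0 ≤ a₂) (ha₃ : 0 ≤ a₃) (ha : 0 < a₁ + a₂ + a₃)
    (hx₁ : 0 < x₁) (hx₂ : 0 < x₂) (hx₃ : 0 < x₃) :
    a₁ * logb b x₁ + a₂ * logb b x₂ + a₃ * logb b x₃ ≤
      (a₁ + a₂ + a₃) * logb b ((a₁ * x₁ + a₂ * x₂ + a₃ * x₃) / (a₁ + a₂ + a₃)) := by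
  have := sum_mul_logb_le_mul_logb_div hb (s := univ) (w := ![a₁, a₂, a₃]) (x := ![x₁, x₂, x₃])
    (by simp [Fin.forall_fin_succ, *]) (by simpa [Fin.sum_univ_three] using ha)
    (by simp [Fin.forall_fin_succ, *])
  simpa [Fin.sum_univ_three] using this

theorem mu_ffccma_capacity_general (γ : ℝ) (hγ : 0 < γ) (K Q R N J T Jmc : ℕ)
    (hR : 0 < R) (hN : 0 < N)
    (hT : 0 < T) (hJ : J = Jmc * T) :
    (∀ μ₁ μ₂ μc : ℝ, 0 ≤ μ₁ → 0 ≤ μ₂ → 0 ≤ μc →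
      (K : ℝ) * μ₁ + Q * μ₂ + R * μc = N →
      ((K : ℝ) * J / 2) * Real.logb 2 (1 + μ₁ * γ) +
          ((Q : ℝ) * T / 2) * Real.logb 2 (1 + Jmc * μ₂ * γ) +
          ((R : ℝ) / 2) * Real.logb 2 (1 + J * μc * γ) ≤
        ((K : ℝ) * J + Q * T + R) / 2 *
          Real.logb 2 (1 + (N : ℝ) * J * γ / ((K : ℝ) * J + Q * T + R))) ∧
    (K : ℝ) * ((J : ℝ) * ((N : ℝ) / ((K : ℝ) * J + Q * T + R))) +
        Q * ((T : ℝ) * ((N : ℝ) / ((K : ℝ) * J + Q * T + R))) +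
        R * ((N : ℝ) / ((K : ℝ) * J + Q * T + R)) = N ∧
    ((K : ℝ) * J / 2) *
        Real.logb 2 (1 + (J : ℝ) * ((N : ℝ) / ((K : ℝ) * J + Q * T + R)) * γ) +
        ((Q : ℝ) * T / 2) *
          Real.logb 2
            (1 + (Jmc : ℝ) * ((T : ℝ) * ((N : ℝ) / ((K : ℝ) * J + Q * T + R))) * γ) +
        ((R : ℝ) / 2) *
          Real.logb 2 (1 + (J : ℝ) * ((N : ℝ) / ((K : ℝ) * J + Q * T + R)) * γ) =
      ((K : ℝ) * J + Q * T + R) / 2 *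
        Real.logb 2 (1 + (N : ℝ) * J * γ / ((K : ℝ) * J + Q * T + R)) ∧
    ((J : ℝ) * ((N : ℝ) / ((K : ℝ) * J + Q * T + R))) /
        ((T : ℝ) * ((N : ℝ) / ((K : ℝ) * J + Q * T + R))) = Jmc := by
  have hJ' : (J : ℝ) = Jmc * T := by exact_mod_cast hJ
  set S : ℝ := K * J + Q * T + R with hS_def
  have hS : 0 < S := by positivity
  have hμc : 0 < (N : ℝ) / S := by positivity
  refine ⟨fun μ₁ μ₂ μc h₁ h₂ hc hpow ↦ ?_, by field_simp; ring, ?_, ?_⟩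
  · have hmean : (K * J / 2 * (1 + μ₁ * γ) + Q * T / 2 * (1 + Jmc * μ₂ * γ)
        + R / 2 * (1 + J * μc * γ)) / (K * J / 2 + Q * T / 2 + R / 2) = 1 + N * J * γ / S := by
      field_simp
      linear_combination S * J * γ * hpow - S * Q * μ₂ * γ * hJ' + J * γ * N * hS_def
    calc _ ≤ _ := mul_logb_add_mul_logb_add_mul_logb_le one_le_two (by positivity)
          (by positivity) (by positivity) (by positivity) (by positivity) (by positivity)
          (by positivity)
      _ = _ := by rw [hmean]; ring
  · have hSNR₂ : (Jmc : ℝ) * (T * (N / S)) * γ = J * (N / S) * γ := by rw [hJ']; ring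
    have hSNR : (N : ℝ) * J * γ / S = J * (N / S) * γ := by ring
    rw [hSNR₂, hSNR, hS_def]
    ring
  · rw [hJ', mul_div_mul_right _ _ hμc.ne', mul_div_cancel_right₀ _ (by positivity)]

/-- Multiuser FF-CCMA capacity: with `J = J_mc·T` users and power constraint
`K·μ₁ + Q·μ₂ + R·μ_c = N`, the sum capacity
`(KJ/2)log₂(1+μ₁γ) + (QT/2)log₂(1+J_mc μ₂ γ) + (R/2)log₂(1+J μ_c γ)` is
maximized at `μ_c = N/(KJ+QT+R)`, `μ₁ = J·μ_c`, `μ₂ = T·μ_c`, achieving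
`((KJ+QT+R)/2)·log₂(1 + N·J·γ/(KJ+QT+R))`, and at the optimum `μ₁/μ₂ = J_mc`. -/
theorem mu_ffccma_capacity (γ : ℝ) (hγ : 0 < γ) (K Q R N J T Jmc : ℕ)
    (hK : 0 < K) (hQ : 0 < Q) (hR : 0 < R) (hN : 0 < N)
    (hT : 0 < T) (hJmc : 0 < Jmc) (hJ : J = Jmc * T) :
    (∀ μ₁ μ₂ μc : ℝ, 0 ≤ μ₁ → 0 ≤ μ₂ → 0 ≤ μc →
      (K : ℝ) * μ₁ + Q * μ₂ + R * μc = N →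
      ((K : ℝ) * J / 2) * Real.logb 2 (1 + μ₁ * γ) +
          ((Q : ℝ) * T / 2) * Real.logb 2 (1 + Jmc * μ₂ * γ) +
          ((R : ℝ) / 2) * Real.logb 2 (1 + J * μc * γ) ≤
        ((K : ℝ) * J + Q * T + R) / 2 *
          Real.logb 2 (1 + (N : ℝ) * J * γ / ((K : ℝ) * J + Q * T + R))) ∧
    (K : ℝ) * ((J : ℝ) * ((N : ℝ) / ((K : ℝ) * J + Q * T + R))) +
        Q * ((T : ℝ) * ((N : ℝ) / ((K : ℝ) * J + Q * T + R))) +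
        R * ((N : ℝ) / ((K : ℝ) * J + Q * T + R)) = N ∧
    ((K : ℝ) * J / 2) *
        Real.logb 2 (1 + (J : ℝ) * ((N : ℝ) / ((K : ℝ) * J + Q * T + R)) * γ) +
        ((Q : ℝ) * T / 2) *
          Real.logb 2
            (1 + (Jmc : ℝ) * ((T : ℝ) * ((N : ℝ) / ((K : ℝ) * J + Q * T + R))) * γ) +
        ((R : ℝ) / 2) *
          Real.logb 2 (1 + (J : ℝ) * ((N : ℝ) / ((K : ℝ) * J + Q * T + R)) * γ) =
      ((K : ℝ) * J + Q * T + R) / 2 *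
        Real.logb 2 (1 + (N : ℝ) * J * γ / ((K : ℝ) * J + Q * T + R)) ∧
    ((J : ℝ) * ((N : ℝ) / ((K : ℝ) * J + Q * T + R))) /
        ((T : ℝ) * ((N : ℝ) / ((K : ℝ) * J + Q * T + R))) = Jmc :=
  mu_ffccma_capacity_general γ hγ K Q R N J T Jmc hR hN hT hJ
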